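/- arXiv:2204.05700 — 6 statements merged into one kernel-verified Lean document; each statement's English description precedes it below -/
import Mathlib

section
/- König's Lemma via local embeddability: if T₁ and T₂ are trees with ω levels, all levels finite, and for every n the union of the first n levels of T₁ embeds as a subtree into the union of the first n levels of T₂, then T₁ embeds as a subtree into T₂ (i.e., there is an injective order-embedding of T₁ into T₂ whose image is downward closed within the image's levels, preserving levels). -/
/-- A well-founded tree order of height at most ω: a partial order with a least
element (root) in which the set of predecessors of every element is finite and
linearly ordered. -/
structure TreeOrder (T : Type*) where
  le : T → T → Prop
  refl : ∀ x, le x x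
  antisymm : ∀ x y, le x y → le y x → x = y
  trans : ∀ x y z, le x y → le y z → le x z
  root : T
  root_le : ∀ x, le root x
  pred_finite : ∀ x, {y | le y x}.Finite
  pred_chain : ∀ x y z, le y x → le z x → le y z ∨ le z y

namespace TreeOrder

variable {T : Type*} (t : TreeOrder T)

/-- The strict order associated to a tree order. -/
def lt (x y : T) : Prop := t.le x y ∧ x ≠ y

/-- The `n`-th level: elements with exactly `n` strict predecessors. -/
def level (n : ℕ) : Set T := {x | {y | t.lt y x}.ncard = n}

/-- The tree has ω levels: every level is nonempty. -/
def OmegaLevels : Prop := ∀ n, (t.level n).Nonempty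

/-- All levels are finite. -/
def FiniteLevels : Prop := ∀ n, (t.level n).Finite

/-- No leaves: every element has a strict successor. -/
def NoLeaves : Prop := ∀ x, ∃ y, t.lt x y

/-- `y` is an immediate successor of `x`. -/
def ImmSucc (x y : T) : Prop := t.lt x y ∧ ¬ ∃ z, t.lt x z ∧ t.lt z y

/-- Union of the first `n` levels. -/
def below (n : ℕ) : Set T := {x | ∃ k < n, x ∈ t.level k}

end TreeOrder

/-!
Choose level-preserving subtree embeddings `F n` of the first `n` levels and take their limit
along a nonprincipal ultrafilter on `ℕ`: since the levels of `T₂` are finite, each value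
`F n x` stabilises on an ultrafilter-large set of `n`, and any finitely many properties of the
`F n` holding for large `n` hold simultaneously for some `n`, so they pass to the limit. The
image of a level- and order-preserving map is automatically downward closed, because below a
given node of `T₂` there is exactly one node on each level.
-/

namespace TreeOrder

variable {T : Type*} (t : TreeOrder T)

noncomputable def lvl (x : T) : ℕ := {y | t.lt y x}.ncard

theorem mem_level_iff {x : T} {k : ℕ} : x ∈ t.level k ↔ t.lvl x = k := Iff.rfl

theorem mem_below_iff {x : T} {n : ℕ} : x ∈ t.below n ↔ t.lvl x < n :=
  ⟨fun ⟨_, hk, hx⟩ => (t.mem_level_iff.1 hx).symm ▸ hk, fun h => ⟨t.lvl x, h, rfl⟩⟩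

theorem setOf_lt_finite (x : T) : {y | t.lt y x}.Finite :=
  (t.pred_finite x).subset fun _ hy => hy.1

theorem setOf_le_eq_insert (x : T) : {y | t.le y x} = insert x {y | t.lt y x} := by
  ext y
  by_cases hyx : y = x
  · simp [hyx, t.refl]
  · simp [lt, hyx]

theorem ncard_setOf_le (x : T) : {y | t.le y x}.ncard = t.lvl x + 1 := by
  rw [setOf_le_eq_insert, Set.ncard_insert_of_notMem (fun h => h.2 rfl) (t.setOf_lt_finite x)]
  rfl

variable {t}

theorem lvl_lt_lvl_of_lt {x y : T} (h : t.lt x y) : t.lvl x < t.lvl y := by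
  refine Set.ncard_lt_ncard ⟨fun z hz => ⟨t.trans _ _ _ hz.1 h.1, ?_⟩, fun hsub => (hsub h).2 rfl⟩
    (t.setOf_lt_finite y)
  rintro rfl
  exact hz.2 (t.antisymm _ _ hz.1 h.1)

theorem lvl_le_lvl_of_le {x y : T} (h : t.le x y) : t.lvl x ≤ t.lvl y := by
  by_cases hxy : x = y
  · rw [hxy]
  · exact (lvl_lt_lvl_of_lt ⟨h, hxy⟩).le

theorem eq_of_le_of_lvl_eq {x y : T} (h : t.le x y) (hl : t.lvl x = t.lvl y) : x = y := by
  by_contra hxy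
  exact (lvl_lt_lvl_of_lt ⟨h, hxy⟩).ne hl

theorem eq_of_le_of_le_of_lvl_eq {x y z : T} (hx : t.le x z) (hy : t.le y z)
    (hl : t.lvl x = t.lvl y) : x = y := by
  rcases t.pred_chain z x y hx hy with h | h
  · exact eq_of_le_of_lvl_eq h hl
  · exact (eq_of_le_of_lvl_eq h hl.symm).symm

/-- The `lvl x + 1` predecessors of `x` lie on pairwise distinct levels among `0, …, lvl x`. -/
theorem exists_le_lvl_eq {x : T} {j : ℕ} (hj : j ≤ t.lvl x) : ∃ w, t.le w x ∧ t.lvl w = j := by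
  have hinj : Set.InjOn t.lvl {y | t.le y x} := fun _ hy _ hz hl =>
    eq_of_le_of_le_of_lvl_eq hy hz hl
  have hsub : t.lvl '' {y | t.le y x} ⊆ ↑(Finset.range (t.lvl x + 1)) := by
    rintro _ ⟨y, hy, rfl⟩
    simpa [Nat.lt_succ_iff] using lvl_le_lvl_of_le hy
  have himage : t.lvl '' {y | t.le y x} = ↑(Finset.range (t.lvl x + 1)) :=
    Set.eq_of_subset_of_ncard_le hsub (by rw [hinj.ncard_image, ncard_setOf_le]; simp)
      (Finset.finite_toSet _)
  obtain ⟨w, hw, hwj⟩ : j ∈ t.lvl '' {y | t.le y x} := by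
    rw [himage]; simpa [Nat.lt_succ_iff] using hj
  exact ⟨w, hw, hwj⟩

variable {S : Type*} {s : TreeOrder S}

theorem injective_of_le_iff {g : T → S} (hg : ∀ x y, t.le x y ↔ s.le (g x) (g y)) :
    Function.Injective g := fun x y hxy =>
  t.antisymm x y ((hg x y).2 (hxy ▸ s.refl _)) ((hg y x).2 (hxy ▸ s.refl _))

theorem exists_eq_of_le_map {g : T → S} (hle : ∀ x y, t.le x y → s.le (g x) (g y))
    (hlvl : ∀ x, s.lvl (g x) = t.lvl x) {x : T} {z : S} (hz : s.le z (g x)) :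
    ∃ w, g w = z := by
  obtain ⟨w, hwx, hw⟩ := exists_le_lvl_eq (x := x) (j := s.lvl z)
    (hlvl x ▸ lvl_le_lvl_of_le hz)
  exact ⟨w, eq_of_le_of_le_of_lvl_eq (hle w x hwx) hz (by rw [hlvl, hw])⟩

end TreeOrder

theorem Ultrafilter.exists_forall_eventually_eq {ι α β : Type*} (U : Ultrafilter ι)
    {F : ι → α → β} {s : α → Set β} (hs : ∀ x, (s x).Finite)
    (hF : ∀ x, ∀ᶠ i in U, F i x ∈ s x) : ∃ g : α → β, ∀ x, ∀ᶠ i in U, F i x = g x := by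
  have h : ∀ x, ∃ b ∈ s x, ∀ᶠ i in U, F i x = b := fun x =>
    (U.eventually_exists_mem_iff (hs x)).1 ((hF x).mono fun _ hi => ⟨_, hi, rfl⟩)
  choose g _ hg using h
  exact ⟨g, hg⟩

theorem stmt5_general {T₁ T₂ : Type*} (t1 : TreeOrder T₁) (t2 : TreeOrder T₂)
    (h2f : t2.FiniteLevels)
    (hloc : ∀ n, ∃ f : T₁ → T₂, Set.InjOn f (t1.below n) ∧
      (∀ x ∈ t1.below n, ∀ y ∈ t1.below n, (t1.le x y ↔ t2.le (f x) (f y))) ∧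
      (∀ k, ∀ x ∈ t1.below n, x ∈ t1.level k → f x ∈ t2.level k)) :
    ∃ f : T₁ → T₂, Function.Injective f ∧
      (∀ x y : T₁, (t1.le x y ↔ t2.le (f x) (f y))) ∧
      (∀ k, ∀ x : T₁, x ∈ t1.level k → f x ∈ t2.level k) ∧
      (∀ x : T₁, ∀ z : T₂, t2.le z (f x) → ∃ w : T₁, f w = z) := by
  choose F _ hord hlev using hloc
  set U := Filter.hyperfilter ℕ
  have hbelow (x : T₁) : ∀ᶠ n in U, x ∈ t1.below n :=
    ((Filter.eventually_gt_atTop _).filter_mono Nat.hyperfilter_le_atTop).mono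
      fun _ => t1.mem_below_iff.2
  have hFlev (x : T₁) : ∀ᶠ n in U, F n x ∈ t2.level (t1.lvl x) :=
    (hbelow x).mono fun n hn => hlev n _ x hn rfl
  obtain ⟨g, hg⟩ := U.exists_forall_eventually_eq (fun x => h2f (t1.lvl x)) hFlev
  have hord_g (x y : T₁) : t1.le x y ↔ t2.le (g x) (g y) := by
    obtain ⟨n, ⟨hx, hxn⟩, hy, hyn⟩ := (((hg x).and (hbelow x)).and ((hg y).and (hbelow y))).exists
    rw [← hx, ← hy]
    exact hord n x hxn y hyn
  have hlvl_g (x : T₁) : t2.lvl (g x) = t1.lvl x := by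
    obtain ⟨n, hx, hxn⟩ := ((hg x).and (hFlev x)).exists
    exact hx ▸ t2.mem_level_iff.1 hxn
  refine ⟨g, TreeOrder.injective_of_le_iff hord_g, hord_g, fun k x hx => ?_, fun x z hz => ?_⟩
  · exact (hlvl_g x).trans hx
  · exact TreeOrder.exists_eq_of_le_map (fun x y => (hord_g x y).1) hlvl_g hz

/-- König's Lemma via local embeddability: if the union of the first n levels
of T₁ embeds (level-preservingly, as a subtree) into that of T₂ for every n,
then T₁ embeds into T₂ as a subtree. -/
theorem stmt5 {T₁ T₂ : Type*} (t1 : TreeOrder T₁) (t2 : TreeOrder T₂)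
    (h1o : t1.OmegaLevels) (h1f : t1.FiniteLevels)
    (h2o : t2.OmegaLevels) (h2f : t2.FiniteLevels)
    (hloc : ∀ n, ∃ f : T₁ → T₂, Set.InjOn f (t1.below n) ∧
      (∀ x ∈ t1.below n, ∀ y ∈ t1.below n, (t1.le x y ↔ t2.le (f x) (f y))) ∧
      (∀ k, ∀ x ∈ t1.below n, x ∈ t1.level k → f x ∈ t2.level k)) :
    ∃ f : T₁ → T₂, Function.Injective f ∧
      (∀ x y : T₁, (t1.le x y ↔ t2.le (f x) (f y))) ∧
      (∀ k, ∀ x : T₁, x ∈ t1.level k → f x ∈ t2.level k) ∧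
      (∀ x : T₁, ∀ z : T₂, t2.le z (f x) → ∃ w : T₁, f w = z) :=
  stmt5_general t1 t2 h2f hloc
end

section
/- Let (T*, ≺) be a template that has an eventually singleton ω-branch, i.e., an infinite branch (X_0 ≺ X_1 ≺ X_2 ≺ …) through the levels such that the integer label n(X_k, X_{k+1}) equals 1 for all but finitely many k. Then any tree T encoded by T* has an infinite branch (an infinite linearly ordered subset meeting every level). -/
/-- A template: a tree with ω levels, all finite (hence finitely branching),
together with a linear order on the immediate successors of each node and a
positive integer label on each edge. -/
structure Template (A : Type*) where
  t : TreeOrder A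
  omega : t.OmegaLevels
  finlev : t.FiniteLevels
  label : A → A → ℕ
  label_pos : ∀ X Y, t.ImmSucc X Y → 0 < label X Y
  sOrd : A → A → A → Prop
  sOrd_trans : ∀ X Y Z W, t.ImmSucc X Y → t.ImmSucc X Z → t.ImmSucc X W →
    sOrd X Y Z → sOrd X Z W → sOrd X Y W
  sOrd_antisymm : ∀ X Y Z, t.ImmSucc X Y → t.ImmSucc X Z →
    sOrd X Y Z → sOrd X Z Y → Y = Z
  sOrd_total : ∀ X Y Z, t.ImmSucc X Y → t.ImmSucc X Z → sOrd X Y Z ∨ sOrd X Z Y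

/-- A tree `t` (with ω levels, all finite) is encoded by the template `τ` via
pieces `E X`: the pieces corresponding to the n-th level of the template
partition the n-th level of the tree, every element of the piece `E X` has
exactly `label X Y` immediate successors in the piece `E Y` for every
≺-immediate successor `Y` of `X`, and no other immediate successors. -/
def Encodes {A T : Type*} (τ : Template A) (t : TreeOrder T) (E : A → Set T) : Prop :=
  t.OmegaLevels ∧ t.FiniteLevels ∧
  (∀ n, ∀ X ∈ τ.t.level n, (E X).Nonempty ∧ E X ⊆ t.level n) ∧
  (∀ n, ∀ x ∈ t.level n, ∃! X, X ∈ τ.t.level n ∧ x ∈ E X) ∧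
  (∀ X Y, τ.t.ImmSucc X Y → ∀ x ∈ E X, {y | y ∈ E Y ∧ t.ImmSucc x y}.ncard = τ.label X Y) ∧
  (∀ x y : T, t.ImmSucc x y → ∃ X Y, τ.t.ImmSucc X Y ∧ x ∈ E X ∧ y ∈ E Y)

theorem exists_seq_mem_of_forall_exists_rel {α : Type*} {S : ℕ → Set α} {R : α → α → Prop}
    (h0 : (S 0).Nonempty) (h : ∀ k, ∀ x ∈ S k, ∃ y ∈ S (k + 1), R x y) :
    ∃ c : ℕ → α, (∀ n, c n ∈ S n) ∧ ∀ n, R (c n) (c (n + 1)) := by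
  choose g hg hR using h
  let c : ∀ n, S n := fun n =>
    Nat.rec ⟨h0.some, h0.some_mem⟩ (fun k x => ⟨g k x x.2, hg k x x.2⟩) n
  exact ⟨fun n => (c n).1, fun n => (c n).2, fun n => hR n (c n).1 (c n).2⟩

namespace TreeOrder

variable {T : Type*} (t : TreeOrder T)

theorem lt_trans {x y z : T} (hxy : t.lt x y) (hyz : t.lt y z) : t.lt x z := by
  refine ⟨t.trans _ _ _ hxy.1 hyz.1, ?_⟩
  rintro rfl
  exact hyz.2 (t.antisymm _ _ hyz.1 hxy.1)

theorem setOf_lt_of_immSucc {x y : T} (h : t.ImmSucc x y) :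
    {z | t.lt z y} = insert x {z | t.lt z x} := by
  ext z
  simp only [Set.mem_ofPred_eq, Set.mem_insert_iff]
  constructor
  · rintro ⟨hzy, hzy'⟩
    rcases t.pred_chain y z x hzy h.1.1 with hzx | hxz
    · by_cases hzx' : z = x
      · exact Or.inl hzx'
      · exact Or.inr ⟨hzx, hzx'⟩
    · by_cases hxz' : x = z
      · exact Or.inl hxz'.symm
      · exact absurd ⟨z, ⟨hxz, hxz'⟩, ⟨hzy, hzy'⟩⟩ h.2
  · rintro (rfl | hzx)
    · exact h.1
    · exact t.lt_trans hzx h.1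

theorem mem_level_succ_of_immSucc {n : ℕ} {x y : T} (hx : x ∈ t.level n)
    (h : t.ImmSucc x y) : y ∈ t.level (n + 1) := by
  have hfin : {z | t.lt z x}.Finite := (t.pred_finite x).subset fun z hz => hz.1
  have hx_notMem : x ∉ {z | t.lt z x} := fun hz => hz.2 rfl
  simp only [level, Set.mem_ofPred_eq] at hx ⊢
  rw [t.setOf_lt_of_immSucc h, Set.ncard_insert_of_notMem hx_notMem hfin, hx]

theorem mem_level_of_immSucc_seq {b : ℕ → T} (hb0 : b 0 ∈ t.level 0)
    (hbs : ∀ k, t.ImmSucc (b k) (b (k + 1))) (k : ℕ) : b k ∈ t.level k := by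
  induction k with
  | zero => exact hb0
  | succ k ih => exact t.mem_level_succ_of_immSucc ih (hbs k)

end TreeOrder

namespace Encodes

variable {A T : Type*} {τ : Template A} {t : TreeOrder T} {E : A → Set T}

theorem exists_immSucc_mem (henc : Encodes τ t E) {X Y : A} (hXY : τ.t.ImmSucc X Y)
    {x : T} (hx : x ∈ E X) : ∃ y ∈ E Y, t.ImmSucc x y := by
  have hcard := henc.2.2.2.2.1 X Y hXY x hx
  have hpos := τ.label_pos X Y hXY
  exact Set.nonempty_of_ncard_ne_zero (s := {y | y ∈ E Y ∧ t.ImmSucc x y}) (by omega)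

end Encodes

theorem stmt10_general {A T : Type*} (τ : Template A) (t : TreeOrder T) (E : A → Set T)
    (henc : Encodes τ t E) (b : ℕ → A) (hb0 : b 0 ∈ τ.t.level 0)
    (hbs : ∀ k, τ.t.ImmSucc (b k) (b (k + 1))) :
    ∃ c : ℕ → T, (∀ n, c n ∈ t.level n) ∧ ∀ n, t.lt (c n) (c (n + 1)) := by
  have hpiece := henc.2.2.1
  have hblev := τ.t.mem_level_of_immSucc_seq hb0 hbs
  obtain ⟨c, hc, hcs⟩ := exists_seq_mem_of_forall_exists_rel (hpiece 0 _ hb0).1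
    fun k _ hx => henc.exists_immSucc_mem (hbs k) hx
  exact ⟨c, fun n => (hpiece n _ (hblev n)).2 (hc n), fun n => (hcs n).1⟩

/-- If the template has an eventually singleton ω-branch then every tree it
encodes has an infinite branch (a chain meeting every level). -/
theorem stmt10 {A T : Type*} (τ : Template A) (t : TreeOrder T) (E : A → Set T)
    (henc : Encodes τ t E) (b : ℕ → A) (hb0 : b 0 ∈ τ.t.level 0)
    (hbs : ∀ k, τ.t.ImmSucc (b k) (b (k + 1)))
    (hev : ∃ K, ∀ k, K ≤ k → τ.label (b k) (b (k + 1)) = 1) :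
    ∃ c : ℕ → T, (∀ n, c n ∈ t.level n) ∧ ∀ n, t.lt (c n) (c (n + 1)) :=
  stmt10_general τ t E henc b hb0 hbs
end

section
/- In the Fraenkel–Mostowski permutation model determined by a group G of permutations of the set U of atoms with the filter generated by finite supports, the set U has no countably infinite subset (is Dedekind finite) if and only if definable closure for G on U is locally finite, i.e., for every finite A ⊆ U, the set dcl(A) = {x ∈ U : every g ∈ G fixing A pointwise fixes x} is finite. -/
/-- The definable closure of `A` under a group `G` of permutations of `Y`:
the set of points fixed by every element of `G` fixing `A` pointwise. -/
def dclP {Y : Type*} (G : Subgroup (Equiv.Perm Y)) (A : Set Y) : Set Y :=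
  {y | ∀ g ∈ G, (∀ a ∈ A, g a = a) → g y = y}

/-- Definable closure is locally finite: finite sets have finite definable closure. -/
def LocFin {Y : Type*} (G : Subgroup (Equiv.Perm Y)) : Prop :=
  ∀ A : Set Y, A.Finite → (dclP G A).Finite

theorem Set.infinite_iff_exists_nat_injective_forall_mem {α : Type*} {s : Set α} :
    s.Infinite ↔ ∃ f : ℕ → α, Function.Injective f ∧ ∀ n, f n ∈ s :=
  ⟨fun hs => ⟨fun n => hs.natEmbedding s n,
      Subtype.val_injective.comp (hs.natEmbedding s).injective,
      fun n => (hs.natEmbedding s n).2⟩,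
    fun ⟨_, hf, hs⟩ => Set.infinite_of_injective_forall_mem hf hs⟩

section DefinableClosure

variable {Y : Type*} (G : Subgroup (Equiv.Perm Y))

theorem forall_mem_dclP_iff {ι : Type*} (f : ι → Y) (A : Set Y) :
    (∀ i, f i ∈ dclP G A) ↔ ∀ g ∈ G, (∀ a ∈ A, g a = a) → ∀ i, g (f i) = f i :=
  ⟨fun h g hg hA i => h i g hg hA, fun h i g hg hA => h g hg hA i⟩

theorem not_locFin_iff : ¬ LocFin G ↔ ∃ A : Set Y, A.Finite ∧ (dclP G A).Infinite := by
  simp only [LocFin, not_forall, Set.Infinite, exists_prop]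

end DefinableClosure

/-- In the Fraenkel-Mostowski model with finite supports determined by G
acting on the set U of atoms, U is Dedekind finite iff definable closure is
locally finite; equivalently, there is a finitely supported injection ℕ → U iff
definable closure is not locally finite. -/
theorem stmt11 {U : Type*} (G : Subgroup (Equiv.Perm U)) :
    (∃ (f : ℕ → U) (A : Set U), A.Finite ∧ Function.Injective f ∧
        ∀ g ∈ G, (∀ a ∈ A, g a = a) → ∀ n, g (f n) = f n) ↔
      ¬ LocFin G := by
  simp only [← forall_mem_dclP_iff, not_locFin_iff,
    Set.infinite_iff_exists_nat_injective_forall_mem]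
  constructor
  · rintro ⟨f, A, hA, hf, hfA⟩
    exact ⟨A, hA, f, hf, hfA⟩
  · rintro ⟨A, hA, f, hf, hfA⟩
    exact ⟨f, A, hA, hf, hfA⟩
end

section
/- Let (X_n)_{n ∈ ω} be a sequence of countably infinite sets and for each n let G_n be a group acting transitively on X_n with |X_n| ≥ 2. Let U be the set of all finite sequences (x_0, …, x_{n-1}) with x_i ∈ X_i, ordered by extension, and let 𝒢 be the group of tree automorphisms of U generated by the actions of the G_n on the (n+1)-th coordinates (fixing sequences of length ≤ n). Then definable closure for 𝒢 is locally finite on U if and only if definable closure for each G_n is locally finite on X_n. -/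
/-!
Every element of the wreath product acts coordinatewise, `σ ↦ (g₀ σ₀, …, g_{k-1} σ_{k-1})` with
`gᵢ ∈ Gᵢ`, and each single-coordinate action `actEquiv n g` lies in it. Hence the `i`-th entry
of a point definable over a finite `A` is definable in `Xᵢ` over the finitely many `i`-th entries
of `A`. Since `G_N` is transitive on a set with two points, nothing is definable over `∅`, so no
definable point is longer than the elements of `A`, and finitely many finite choices remain.
Conversely, `X n` embeds into the tree as the children of a node `τ` of length `n`, and a point of
`X n` definable over `B` gives a child of `τ` definable over `τ` and the children labelled by `B`.
-/

/-- Finite sequences (x_0, ..., x_{n-1}) with x_i in X i. -/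
abbrev Seqs (X : ℕ → Type*) := Σ n, Π i : Fin n, X i

/-- Apply g to the (n+1)-th entry of a sequence (if present), fixing all
sequences of length at most n and all other entries. -/
def actFun {X : ℕ → Type*} (n : ℕ) (g : X n → X n) : Seqs X → Seqs X :=
  fun σ => ⟨σ.1, fun i =>
    if h : (i : ℕ) = n then
      cast (congrArg X h).symm (g (cast (congrArg X h) (σ.2 i)))
    else σ.2 i⟩

/-- The permutation of the tree of finite sequences induced by a permutation
of X n acting on the (n+1)-th coordinate. -/
def actEquiv {X : ℕ → Type*} (n : ℕ) (g : Equiv.Perm (X n)) : Equiv.Perm (Seqs X) where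
  toFun := actFun n g
  invFun := actFun n g.symm
  left_inv := by
    intro σ
    unfold actFun
    refine Sigma.ext rfl ?_
    simp only [heq_eq_eq]
    funext i
    rcases i with ⟨iv, hi⟩
    by_cases h : iv = n
    · subst h
      simp
    · simp [h]
  right_inv := by
    intro σ
    unfold actFun
    refine Sigma.ext rfl ?_
    simp only [heq_eq_eq]
    funext i
    rcases i with ⟨iv, hi⟩
    by_cases h : iv = n
    · subst h
      simp
    · simp [h]

/-- The iterated wreath product: the subgroup of permutations of the tree of
sequences generated by the coordinatewise actions of the groups G n. -/
def wreath {X : ℕ → Type*} (G : ∀ n, Subgroup (Equiv.Perm (X n))) :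
    Subgroup (Equiv.Perm (Seqs X)) :=
  Subgroup.closure {π | ∃ n, ∃ g ∈ G n, π = actEquiv n g}

/-- The prefix (extension) order on finite sequences. -/
def prefixLE {X : ℕ → Type*} (σ τ : Seqs X) : Prop :=
  ∃ h : σ.1 ≤ τ.1, ∀ i : Fin σ.1, σ.2 i = τ.2 ⟨i, lt_of_lt_of_le i.2 h⟩

/-- Extend a sequence of length n by one further entry from X n. -/
def extSeq {X : ℕ → Type*} (σ : Seqs X) (x : X σ.1) : Seqs X :=
  ⟨σ.1 + 1, Fin.snoc (α := fun i : Fin (σ.1 + 1) => X i) σ.2 x⟩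

open Equiv

lemma dclP_empty {Y : Type*} [Nontrivial Y] {G : Subgroup (Perm Y)}
    (htrans : ∀ x y : Y, ∃ g ∈ G, g x = y) : dclP G ∅ = ∅ := by
  refine Set.eq_empty_of_forall_notMem fun x hx => ?_
  obtain ⟨y, hy⟩ := exists_ne x
  obtain ⟨g, hg, rfl⟩ := htrans x y
  exact hy (hx g hg fun _ => False.elim)

section Coordinatewise

variable {X : ℕ → Type*}

def coordPerm : (∀ m, Perm (X m)) →* Perm (Seqs X) where
  toFun g := Equiv.sigmaCongrRight fun n => Equiv.piCongrRight fun i : Fin n => g i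
  map_one' := rfl
  map_mul' _ _ := rfl

@[simp]
lemma coordPerm_apply (g : ∀ m, Perm (X m)) (σ : Seqs X) :
    coordPerm g σ = ⟨σ.1, fun i => g i (σ.2 i)⟩ :=
  rfl

lemma coordPerm_eq_self_iff {g : ∀ m, Perm (X m)} {σ : Seqs X} :
    coordPerm g σ = σ ↔ ∀ i : Fin σ.1, g i (σ.2 i) = σ.2 i := by
  simp [Sigma.ext_iff, funext_iff]

lemma actEquiv_eq_coordPerm (n : ℕ) (g : Perm (X n)) :
    actEquiv n g = coordPerm (Pi.mulSingle n g) := by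
  ext σ : 1
  refine Sigma.ext rfl (heq_of_eq (funext fun i => ?_))
  by_cases h : (i : ℕ) = n
  · obtain ⟨i, hi⟩ := i
    dsimp only at h
    subst h
    simp [actEquiv, actFun]
  · simp [actEquiv, actFun, h]

end Coordinatewise

section Wreath

variable {X : ℕ → Type*} {G : ∀ n, Subgroup (Perm (X n))}

lemma actEquiv_mem_wreath {n : ℕ} {g : Perm (X n)} (hg : g ∈ G n) :
    actEquiv n g ∈ wreath G :=
  Subgroup.subset_closure ⟨n, g, hg, rfl⟩

lemma wreath_le_map_coordPerm : wreath G ≤ (Subgroup.pi Set.univ G).map coordPerm := by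
  refine (Subgroup.closure_le _).2 ?_
  rintro _ ⟨n, g, hg, rfl⟩
  have hmem : Pi.mulSingle n g ∈ Subgroup.pi Set.univ G :=
    (Subgroup.mulSingle_mem_pi (f := fun m => Perm (X m)) n g).2 fun _ => hg
  exact ⟨Pi.mulSingle n g, hmem, (actEquiv_eq_coordPerm n g).symm⟩

lemma actEquiv_eq_self_iff {n : ℕ} {g : Perm (X n)} {σ : Seqs X} :
    actEquiv n g σ = σ ↔ ∀ h : n < σ.1, g (σ.2 ⟨n, h⟩) = σ.2 ⟨n, h⟩ := by
  rw [actEquiv_eq_coordPerm, coordPerm_eq_self_iff]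
  constructor
  · intro hfix h
    simpa using hfix ⟨n, h⟩
  · rintro hfix ⟨i, hi⟩
    by_cases h : i = n
    · subst h
      simpa using hfix hi
    · simp [h]

end Wreath

section Extension

variable {X : ℕ → Type*}

lemma extSeq_injective (τ : Seqs X) : Function.Injective (extSeq τ) := by
  intro x y h
  have := congr_fun (eq_of_heq (Sigma.mk.inj_iff.1 h).2) (Fin.last τ.1)
  simpa [extSeq] using this

lemma coordPerm_extSeq {g : ∀ m, Perm (X m)} {τ : Seqs X} (hτ : coordPerm g τ = τ)
    (x : X τ.1) :
    coordPerm g (extSeq τ x) = extSeq τ (g τ.1 x) := by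
  refine Sigma.ext rfl (heq_of_eq (funext fun i => ?_))
  refine Fin.lastCases ?_ (fun j => ?_) i
  · simp [extSeq]
  · simpa [extSeq] using coordPerm_eq_self_iff.1 hτ j

lemma dclP_subset_preimage_extSeq (G : ∀ n, Subgroup (Perm (X n))) (τ : Seqs X)
    (B : Set (X τ.1)) :
    dclP (G τ.1) B ⊆ extSeq τ ⁻¹' dclP (wreath G) (insert τ (extSeq τ '' B)) := by
  intro y hy π hπ hfix
  obtain ⟨g, hg, rfl⟩ := wreath_le_map_coordPerm hπ
  have hτ : coordPerm g τ = τ := hfix τ (Set.mem_insert _ _)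
  have hB : ∀ b ∈ B, g τ.1 b = b := fun b hb => extSeq_injective τ <| by
    rw [← coordPerm_extSeq hτ]
    exact hfix _ (Set.mem_insert_of_mem _ ⟨b, hb, rfl⟩)
  rw [coordPerm_extSeq hτ, hy (g τ.1) (hg τ.1 trivial) hB]

end Extension

section Entries

variable {X : ℕ → Type*}

def entries (A : Set (Seqs X)) (n : ℕ) : Set (X n) :=
  ⋃ a ∈ A, Set.range fun h : n < a.1 => a.2 ⟨n, h⟩

lemma Set.Finite.entries {A : Set (Seqs X)} (hA : A.Finite) (n : ℕ) : (entries A n).Finite :=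
  hA.biUnion fun _ _ => Set.finite_range _

lemma entries_eq_empty {A : Set (Seqs X)} {n : ℕ} (hA : ∀ a ∈ A, a.1 ≤ n) :
    entries A n = ∅ := by
  simp only [entries, Set.iUnion_eq_empty, Set.range_eq_empty_iff]
  exact fun a ha => ⟨fun h => (hA a ha).not_gt h⟩

lemma finite_setOf_length_le (N : ℕ) {S : ∀ n, Set (X n)} (hS : ∀ n, (S n).Finite) :
    {σ : Seqs X | σ.1 ≤ N ∧ ∀ i : Fin σ.1, σ.2 i ∈ S i}.Finite := by
  refine ((Set.finite_Iic N).biUnion fun m _ =>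
    (Set.Finite.pi fun i : Fin m => hS i).image (Sigma.mk m)).subset ?_
  rintro ⟨m, f⟩ ⟨hm, hf⟩
  exact Set.mem_biUnion hm ⟨f, fun i _ => hf i, rfl⟩

end Entries

section DefinableClosure

variable {X : ℕ → Type*} {G : ∀ n, Subgroup (Perm (X n))} {A : Set (Seqs X)} {σ : Seqs X}

lemma mem_dclP_entries (hσ : σ ∈ dclP (wreath G) A) (i : Fin σ.1) :
    σ.2 i ∈ dclP (G i) (entries A i) := by
  intro g hg hfix
  have hA : ∀ a ∈ A, actEquiv i g a = a := fun a ha =>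
    actEquiv_eq_self_iff.2 fun h => hfix _ (Set.mem_biUnion ha ⟨h, rfl⟩)
  exact actEquiv_eq_self_iff.1 (hσ _ (actEquiv_mem_wreath hg) hA) i.2

lemma length_le_of_mem_dclP_wreath [∀ n, Nontrivial (X n)]
    (htrans : ∀ n, ∀ x y : X n, ∃ g ∈ G n, g x = y) {N : ℕ} (hA : ∀ a ∈ A, a.1 ≤ N)
    (hσ : σ ∈ dclP (wreath G) A) : σ.1 ≤ N := by
  by_contra! h
  have := mem_dclP_entries hσ ⟨N, h⟩
  rwa [entries_eq_empty hA, dclP_empty (htrans N)] at this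

lemma locFin_wreath [∀ n, Nontrivial (X n)]
    (htrans : ∀ n, ∀ x y : X n, ∃ g ∈ G n, g x = y) (hG : ∀ n, LocFin (G n)) :
    LocFin (wreath G) := by
  intro A hA
  obtain ⟨N, hN⟩ := (hA.image Sigma.fst).bddAbove
  have hAN : ∀ a ∈ A, a.1 ≤ N := fun a ha => hN (Set.mem_image_of_mem _ ha)
  exact (finite_setOf_length_le N fun n => hG n _ (hA.entries n)).subset fun σ hσ =>
    ⟨length_le_of_mem_dclP_wreath htrans hAN hσ, mem_dclP_entries hσ⟩

lemma locFin_of_locFin_wreath [∀ n, Nonempty (X n)] (h : LocFin (wreath G)) (n : ℕ) :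
    LocFin (G n) := by
  intro B hB
  let τ : Seqs X := ⟨n, fun i => Classical.arbitrary _⟩
  exact ((h _ ((hB.image _).insert τ)).preimage (extSeq_injective τ).injOn).subset
    (dclP_subset_preimage_extSeq G τ B)

end DefinableClosure

theorem stmt13_general {X : ℕ → Type*} [∀ n, Infinite (X n)]
    (G : ∀ n, Subgroup (Equiv.Perm (X n)))
    (htrans : ∀ n, ∀ x y : X n, ∃ g ∈ G n, g x = y) :
    LocFin (wreath G) ↔ ∀ n, LocFin (G n) :=
  ⟨locFin_of_locFin_wreath, locFin_wreath htrans⟩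

/-- Definable closure for the iterated wreath product acting on the tree of
finite sequences is locally finite iff definable closure for each G n on X n
is locally finite. -/
theorem stmt13 {X : ℕ → Type*} [∀ n, Countable (X n)] [∀ n, Infinite (X n)]
    (G : ∀ n, Subgroup (Equiv.Perm (X n)))
    (htrans : ∀ n, ∀ x y : X n, ∃ g ∈ G n, g x = y) :
    LocFin (wreath G) ↔ ∀ n, LocFin (G n) :=
  stmt13_general G htrans
end

section
/- Let U = {u_{n,i} : n ∈ ℕ, i ∈ {0,1}} be a disjoint union of pairs U_n = {u_{n,0}, u_{n,1}}, and let G be the group of permutations of U fixing each U_n setwise. Then for every function f : U → U ∪ {*} (with * ∉ U) that is supported by ⋃_{k<N} U_k (i.e., every g ∈ G fixing ⋃_{k<N} U_k pointwise satisfies g∘f = f∘g as graphs, meaning (x,y) ∈ f ⇒ (gx, gy) ∈ f), f is not surjective onto U ∪ {*}. -/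
/-!
Swapping the two socks of a pair `m` outside the support fixes every sock of the other pairs, so
`f` can send a sock to a sock of pair `m` only if it comes from pair `m` itself. By surjectivity
both socks of pair `m` are hit, hence pair `m` is mapped onto itself. Consequently the `2N` socks
of the `N` supporting pairs would have to cover the `2N + 1` values `*` and those same socks.
-/

open Finset Function

namespace Socks

variable {ι : Type*} [DecidableEq ι]

def IsSupportedBy (S : Finset ι) (f : ι × Fin 2 → Option (ι × Fin 2)) : Prop :=
  ∀ g : Equiv.Perm (ι × Fin 2), (∀ p, (g p).1 = p.1) → (∀ p, p.1 ∈ S → g p = p) →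
    ∀ x, f (g x) = Option.map g (f x)

lemma swap_pair_apply_fst (m : ι) (p : ι × Fin 2) :
    (Equiv.swap (m, 0) (m, 1) p).1 = p.1 := by
  rw [Equiv.swap_apply_def]
  split_ifs with h₀ h₁
  · rw [h₀]
  · rw [h₁]
  · rfl

lemma swap_pair_apply_of_fst_ne {m : ι} {p : ι × Fin 2} (h : p.1 ≠ m) :
    Equiv.swap (m, 0) (m, 1) p = p :=
  Equiv.swap_apply_of_ne_of_ne (fun hp => h (by rw [hp])) (fun hp => h (by rw [hp]))

lemma swap_pair_apply_ne_self (m : ι) (i : Fin 2) : Equiv.swap (m, 0) (m, 1) (m, i) ≠ (m, i) := by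
  fin_cases i <;> simp

variable {S : Finset ι} {f : ι × Fin 2 → Option (ι × Fin 2)}

lemma IsSupportedBy.fst_eq_of_apply_eq_some (hf : IsSupportedBy S f) {x : ι × Fin 2} {m : ι}
    {i : Fin 2} (hm : m ∉ S) (hx : f x = some (m, i)) : x.1 = m := by
  by_contra hne
  have hcomm := hf (Equiv.swap (m, 0) (m, 1)) (swap_pair_apply_fst m)
    (fun p hp => swap_pair_apply_of_fst_ne (ne_of_mem_of_not_mem hp hm)) x
  rw [swap_pair_apply_of_fst_ne hne, hx, Option.map_some, Option.some_inj] at hcomm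
  exact swap_pair_apply_ne_self m i hcomm.symm

lemma IsSupportedBy.exists_apply_eq_some (hf : IsSupportedBy S f) (hsurj : Surjective f)
    {x : ι × Fin 2} (hx : x.1 ∉ S) : ∃ i, f x = some (x.1, i) := by
  obtain ⟨s, hs⟩ := hsurj.hasRightInverse
  have hfst (i : Fin 2) : (s (some (x.1, i))).1 = x.1 := hf.fst_eq_of_apply_eq_some hx (hs _)
  have hinj : Injective fun i => (s (some (x.1, i))).2 := by
    intro i j hij
    have hs_eq : s (some (x.1, i)) = s (some (x.1, j)) := Prod.ext (by rw [hfst, hfst]) hij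
    simpa [hs _] using congrArg f hs_eq
  obtain ⟨i, hi⟩ := Finite.injective_iff_surjective.1 hinj x.2
  have hpre : s (some (x.1, i)) = x := Prod.ext (hfst i) hi
  have hval := hs (some (x.1, i))
  rw [hpre] at hval
  exact ⟨i, hval⟩

theorem IsSupportedBy.not_surjective (hf : IsSupportedBy S f) : ¬ Surjective f := by
  intro hsurj
  set A : Finset (ι × Fin 2) := S ×ˢ univ
  have hcover : A.insertNone ⊆ A.image f := by
    intro y hy
    obtain ⟨x, rfl⟩ := hsurj y
    refine mem_image_of_mem f ?_
    by_contra hxA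
    have hx : x.1 ∉ S := by simpa [A] using hxA
    obtain ⟨i, hi⟩ := hf.exists_apply_eq_some hsurj hx
    have hmem : (x.1, i) ∈ A := mem_insertNone.1 hy _ hi
    exact hx (mem_product.1 hmem).1
  have hcard := (card_le_card hcover).trans card_image_le
  rw [card_insertNone] at hcard
  omega

end Socks

/-- Russell's pairs of socks: for the set U = ℕ × {0,1} of atoms with the group
of permutations fixing each pair {(n,0),(n,1)} setwise, no function
f : U → U ∪ {*} supported by finitely many pairs is surjective. -/
theorem stmt16 (f : ℕ × Fin 2 → Option (ℕ × Fin 2)) (N : ℕ)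
    (hsupp : ∀ g : Equiv.Perm (ℕ × Fin 2), (∀ p : ℕ × Fin 2, (g p).1 = p.1) →
      (∀ p : ℕ × Fin 2, p.1 < N → g p = p) →
      ∀ x : ℕ × Fin 2, f (g x) = Option.map (⇑g) (f x)) :
    ¬ Function.Surjective f :=
  Socks.IsSupportedBy.not_surjective (S := range N)
    fun g hg hfix => hsupp g hg fun p hp => hfix p (mem_range.2 hp)
end

section
/- Let U_n (n ∈ ℕ) be pairwise disjoint sets, each with a group G_n acting transitively, with |U_n| ≥ 2, and let U = ⋃_n U_n with G = ∏_n G_n acting coordinatewise. Suppose f : U → U ∪ {*} is a surjection whose graph is invariant under every element of G fixing ⋃_{k<N} U_k pointwise (for some N). Then for every i ≥ N, f⁻¹(U_i) ⊆ U_i, and consequently f restricted to ⋃_{k<N} U_k surjects onto ⋃_{k<N} U_k ∪ {*}. -/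
/-!
For `m ≥ N`, an element of `G_m` extended by the identity on the other `U_n` fixes
`⋃_{k<N} U_k` pointwise, so it commutes with `f`; it also fixes every point outside `U_m`.
Hence if some `u ∉ U_i` had `f u = x ∈ U_i`, all of `G_i` would fix `x`, contradicting
transitivity and `|U_i| ≥ 2`. If some `u ∈ U_m` were sent to `*` or into `⋃_{k<N} U_k`,
transitivity would make `f` take that value on all of `U_m`; but the preimage of `U_m` is
nonempty by surjectivity and lies in `U_m` by the first part.
-/

theorem Equiv.sigmaCongrRight_mulSingle_apply_of_fst_ne {ι : Type*} [DecidableEq ι]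
    {X : ι → Type*} {i : ι} {σ : Equiv.Perm (X i)} {u : Σ j, X j} (hu : u.1 ≠ i) :
    Equiv.sigmaCongrRight (Pi.mulSingle i σ) u = u := by
  obtain ⟨j, x⟩ := u
  simp [Pi.mulSingle_eq_of_ne hu]

section

variable {X : ℕ → Type*}

def GraphInvariantUnderStabilizer (G : ∀ n, Subgroup (Equiv.Perm (X n)))
    (f : (Σ n, X n) → Option (Σ n, X n)) (N : ℕ) : Prop :=
  ∀ g : ∀ n, Equiv.Perm (X n), (∀ n, g n ∈ G n) → (∀ k, k < N → ∀ x : X k, g k x = x) →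
    ∀ u : Σ n, X n, f (Equiv.sigmaCongrRight g u) = Option.map (Equiv.sigmaCongrRight g) (f u)

namespace GraphInvariantUnderStabilizer

variable {G : ∀ n, Subgroup (Equiv.Perm (X n))} {f : (Σ n, X n) → Option (Σ n, X n)} {N i m : ℕ}
  {σ : Equiv.Perm (X m)}

theorem apply_map_mulSingle (hf : GraphInvariantUnderStabilizer G f N) (hm : N ≤ m)
    (hσ : σ ∈ G m) (u : Σ n, X n) :
    f (Equiv.sigmaCongrRight (Pi.mulSingle m σ) u) =
      Option.map (Equiv.sigmaCongrRight (Pi.mulSingle m σ)) (f u) := by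
  refine hf _ (fun n => ?_) (fun k hk x => ?_) u
  · rcases eq_or_ne n m with rfl | hn
    · simp [hσ]
    · simp [Pi.mulSingle_eq_of_ne hn]
  · rw [Pi.mulSingle_eq_of_ne (by omega)]
    rfl

theorem fst_eq_of_apply_eq_some [Nontrivial (X i)] (hf : GraphInvariantUnderStabilizer G f N)
    (htrans : ∀ x y : X i, ∃ g ∈ G i, g x = y) (hi : N ≤ i) {u : Σ n, X n} {x : X i}
    (hu : f u = some ⟨i, x⟩) : u.1 = i := by
  by_contra hne
  obtain ⟨y, hyx⟩ := exists_ne x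
  obtain ⟨σ, hσ, rfl⟩ := htrans x y
  have h := hf.apply_map_mulSingle hi hσ u
  rw [Equiv.sigmaCongrRight_mulSingle_apply_of_fst_ne hne, hu] at h
  simp at h
  exact hyx h.symm

theorem fst_lt_of_apply_eq [∀ n, Nontrivial (X n)] (hf : GraphInvariantUnderStabilizer G f N)
    (htrans : ∀ n, ∀ x y : X n, ∃ g ∈ G n, g x = y) (hsurj : Function.Surjective f)
    {v : Option (Σ n, X n)} (hv : ∀ w ∈ v, w.1 < N) {u : Σ n, X n} (hu : f u = v) :
    u.1 < N := by
  obtain ⟨m, a⟩ := u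
  by_contra! hm
  obtain ⟨x⟩ : Nonempty (X m) := inferInstance
  obtain ⟨⟨m', b⟩, hb⟩ := hsurj (some ⟨m, x⟩)
  obtain rfl : m = m' := (hf.fst_eq_of_apply_eq_some (htrans m) hm hb).symm
  obtain ⟨σ, hσ, rfl⟩ := htrans m a b
  have hv_fixed : Option.map (Equiv.sigmaCongrRight (Pi.mulSingle m σ)) v = v := by
    rcases v with _ | w
    · rfl
    · simp [Equiv.sigmaCongrRight_mulSingle_apply_of_fst_ne ((hv w rfl).trans_le hm).ne]
  have h : f ⟨m, σ a⟩ = v := by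
    simpa [hu, hv_fixed] using hf.apply_map_mulSingle hm hσ ⟨m, a⟩
  rw [hb] at h
  exact (hv _ h.symm).not_ge hm

end GraphInvariantUnderStabilizer

end

/-- For pairwise disjoint sets U_n (modelled as the summands of a sigma type)
with transitive group actions and at least two elements each, any surjection
f : U → U ∪ {*} whose graph is invariant under every element of the product
group fixing the first N summands pointwise satisfies f⁻¹(U_i) ⊆ U_i for all
i ≥ N, and consequently f restricted to the first N summands surjects onto
their union together with {*}. -/
theorem stmt17 {X : ℕ → Type*} [∀ n, Nontrivial (X n)]
    (G : ∀ n, Subgroup (Equiv.Perm (X n)))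
    (htrans : ∀ n, ∀ x y : X n, ∃ g ∈ G n, g x = y)
    (f : (Σ n, X n) → Option (Σ n, X n)) (N : ℕ)
    (hsurj : Function.Surjective f)
    (hsupp : ∀ g : ∀ n, Equiv.Perm (X n), (∀ n, g n ∈ G n) →
      (∀ k, k < N → ∀ x : X k, g k x = x) →
      ∀ u : Σ n, X n,
        f ⟨u.1, g u.1 u.2⟩ =
          Option.map (fun v : Σ n, X n => (⟨v.1, g v.1 v.2⟩ : Σ n, X n)) (f u)) :
    (∀ i, N ≤ i → ∀ u : Σ n, X n, ∀ x : X i, f u = some ⟨i, x⟩ → u.1 = i) ∧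
      (∀ v : Option (Σ n, X n),
        (v = none ∨ ∃ k, k < N ∧ ∃ x : X k, v = some ⟨k, x⟩) →
          ∃ u : Σ n, X n, u.1 < N ∧ f u = v) := by
  have hf : GraphInvariantUnderStabilizer G f N := hsupp
  refine ⟨fun i hi u x hu => hf.fst_eq_of_apply_eq_some (htrans i) hi hu, fun v hv => ?_⟩
  have hv_lt : ∀ w ∈ v, w.1 < N := by
    rintro w rfl
    obtain h | ⟨k, hk, x, h⟩ := hv
    · cases h
    · cases h; exact hk
  obtain ⟨u, hu⟩ := hsurj v
  exact ⟨u, hf.fst_lt_of_apply_eq htrans hsurj hv_lt hu, hu⟩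
end
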